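/- arXiv:1610.07961 — 3 statements merged into one kernel-verified Lean document; each statement's English description precedes it below -/
import Mathlib

section
/- Fix $\beta>0$. There exists $\mu=\mu(\beta,n)>0$ such that the following holds: if $w\in L^2_{loc}(\mathbb{R}^{n+1})$ satisfies $\|w-\mathrm{Pr}(w,R)\|_{\tilde L^2(B_R)}\leq\mu\|w\|_{\tilde L^2(B_R)}$ for all $R\geq 1$, then $\|w\|_{\tilde L^2(B_R)}\leq R^{1+\beta}\|w\|_{\tilde L^2(B_1)}$ for all $R\geq 2$. -/
open MeasureTheory Metric

/-- The normalized (average) `L²` norm `‖u‖_{L̃²(B_r)}` on the ball `B_r ⊂ ℝ^{n+1}`. -/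
noncomputable def tL2 (n : ℕ) (u : EuclideanSpace ℝ (Fin (n+1)) → ℝ) (r : ℝ) : ℝ :=
  Real.sqrt ((volume (ball (0 : EuclideanSpace ℝ (Fin (n+1))) r)).toReal⁻¹
    * ∫ x in ball (0 : EuclideanSpace ℝ (Fin (n+1))) r, (u x) ^ 2)

/-- `a x_{n+1}` is the `L²(B_r)`-projection of `u` onto `𝒫 = {b x_{n+1} : b ∈ ℝ}`. -/
def IsProj (n : ℕ) (u : EuclideanSpace ℝ (Fin (n+1)) → ℝ) (r : ℝ) (a : ℝ) : Prop :=
  ∀ b : ℝ,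
    (∫ x in ball (0 : EuclideanSpace ℝ (Fin (n+1))) r, (u x - a * x (Fin.last n)) ^ 2)
      ≤ ∫ x in ball (0 : EuclideanSpace ℝ (Fin (n+1))) r, (u x - b * x (Fin.last n)) ^ 2

/-!
Fix `ρ = s r` with `r ≥ 1`, `s ∈ [1, 2]`, and let `ℓ = a(ρ) x_{n+1}`. Being `1`-homogeneous, `ℓ` has
exactly linear averaged norm, `‖ℓ‖_ρ = s ‖ℓ‖_r`, while passing from the average over `B_ρ` to the
average over `B_r ⊂ B_ρ` costs at most `2^{(n+1)/2}`. The triangle inequality at both radii gives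
`(1 - K μ) ‖w‖_ρ ≤ s ‖w‖_r` with `K = 1 + 2·2^{(n+1)/2}`. Choosing `1 - K μ = 2^{-β/2}`, each
dilation by `s` multiplies the norm by at most `2^{β/2} s`; iterating over dyadic scales up to
`2^k ≤ R < 2^{k+1}` (so `k ≥ 1`) the accumulated factor is `2^{β(k+1)/2} ≤ 2^{βk} ≤ R^β`.
-/

theorem Continuous.memLp_restrict_ball {X F : Type*} [PseudoMetricSpace X] [ProperSpace X]
    [MeasurableSpace X] [OpensMeasurableSpace X] [NormedAddCommGroup F] {μ : Measure X}
    [IsFiniteMeasureOnCompacts μ] {f : X → F} (hf : Continuous f) (x : X) (r : ℝ)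
    (p : ENNReal) : MemLp f p (μ.restrict (ball x r)) := by
  obtain ⟨C, hC⟩ := (isCompact_closedBall x r).exists_bound_of_continuousOn hf.continuousOn
  have : IsFiniteMeasure (μ.restrict (ball x r)) :=
    isFiniteMeasure_restrict.2 measure_ball_lt_top.ne
  refine (memLp_top_of_bound hf.aestronglyMeasurable C ?_).mono_exponent le_top
  exact ae_restrict_of_forall_mem measurableSet_ball fun y hy => hC y (ball_subset_closedBall hy)

section

open Pointwise

variable {n : ℕ}

local notation "E" => EuclideanSpace ℝ (Fin (n+1))

theorem tL2_nonneg (u : E → ℝ) (r : ℝ) : 0 ≤ tL2 n u r :=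
  Real.sqrt_nonneg _

theorem tL2_eq_mul_lpNorm {u : E → ℝ} {r : ℝ}
    (hu : AEStronglyMeasurable u (volume.restrict (ball 0 r))) :
    tL2 n u r = √(volume (ball (0 : E) r)).toReal⁻¹
      * lpNorm u 2 (volume.restrict (ball 0 r)) := by
  rw [lpNorm_eq_integral_norm_rpow_toReal two_ne_zero ENNReal.ofNat_ne_top hu, tL2,
    Real.sqrt_mul (by positivity)]
  congr 1
  rw [Real.sqrt_eq_rpow]
  norm_num [Real.norm_eq_abs, sq_abs]

theorem tL2_le_add_sub {u v : E → ℝ} {r : ℝ} (hu : MemLp u 2 (volume.restrict (ball 0 r)))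
    (hv : MemLp v 2 (volume.restrict (ball 0 r))) :
    tL2 n u r ≤ tL2 n v r + tL2 n (fun x => u x - v x) r := by
  rw [tL2_eq_mul_lpNorm hu.1, tL2_eq_mul_lpNorm hv.1,
    tL2_eq_mul_lpNorm (u := fun x => u x - v x) (hu.sub hv).1, ← mul_add]
  exact mul_le_mul_of_nonneg_left (lpNorm_le_lpNorm_add_lpNorm_sub' hv one_le_two)
    (Real.sqrt_nonneg _)

theorem tL2_const_mul (c : ℝ) (u : E → ℝ) (r : ℝ) :
    tL2 n (fun x => c * u x) r = |c| * tL2 n u r := by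
  simp only [tL2, mul_pow, integral_const_mul]
  rw [mul_left_comm, Real.sqrt_mul (sq_nonneg c), Real.sqrt_sq_eq_abs]

theorem tL2_sub_comm (u v : E → ℝ) (r : ℝ) :
    tL2 n (fun x => u x - v x) r = tL2 n (fun x => v x - u x) r := by
  simpa using tL2_const_mul (-1) (fun x => v x - u x) r

theorem volume_ball_toReal {r : ℝ} (hr : 0 ≤ r) :
    (volume (ball (0 : E) r)).toReal = r ^ (n+1) * (volume (ball (0 : E) 1)).toReal := by
  rw [Measure.addHaar_ball volume 0 hr, finrank_euclideanSpace_fin, ENNReal.toReal_mul,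
    ENNReal.toReal_ofReal (by positivity)]

theorem tL2_comp_smul (u : E → ℝ) {r : ℝ} (hr : 0 < r) :
    tL2 n (fun x => u (r • x)) 1 = tL2 n u r := by
  have hball : r • ball (0 : E) 1 = ball 0 r := by
    rw [_root_.smul_ball hr.ne', smul_zero, Real.norm_eq_abs, abs_of_pos hr, mul_one]
  have hcov := Measure.setIntegral_comp_smul_of_pos volume (fun y => u y ^ 2) (ball (0 : E) 1) hr
  rw [tL2, tL2, hcov, hball, finrank_euclideanSpace_fin,
    volume_ball_toReal hr.le, smul_eq_mul, mul_inv, ← mul_assoc, mul_comm _ (r ^ (n+1))⁻¹]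

theorem tL2_of_homogeneous {u : E → ℝ} (hu : ∀ t : ℝ, 0 < t → ∀ x, u (t • x) = t * u x) {r : ℝ}
    (hr : 0 < r) : tL2 n u r = r * tL2 n u 1 := by
  rw [← tL2_comp_smul u hr]
  simp only [hu r hr, tL2_const_mul, abs_of_pos hr]

theorem tL2_le_of_le {u : E → ℝ} {r r' : ℝ} (hr : 0 < r) (hrr' : r ≤ r')
    (hu : MemLp u 2 (volume.restrict (ball 0 r'))) :
    tL2 n u r ≤ √((r' / r) ^ (n+1)) * tL2 n u r' := by
  have hr' : 0 < r' := hr.trans_le hrr'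
  have hI : ∫ x in ball (0 : E) r, u x ^ 2 ≤ ∫ x in ball (0 : E) r', u x ^ 2 :=
    setIntegral_mono_set hu.integrable_sq (.of_forall fun x => sq_nonneg _)
      (ball_subset_ball hrr').eventuallyLE
  rw [tL2, tL2, ← Real.sqrt_mul (by positivity), volume_ball_toReal hr.le,
    volume_ball_toReal hr'.le]
  set V := (volume (ball (0 : E) 1)).toReal
  set J := ∫ x in ball (0 : E) r', u x ^ 2
  apply Real.sqrt_le_sqrt
  rw [show (r' / r) ^ (n+1) * ((r' ^ (n+1) * V)⁻¹ * J) = (r ^ (n+1) * V)⁻¹ * J by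
    rw [div_pow]; field_simp]
  gcongr

theorem tL2_dilate_le_of_linear_approx {w : E → ℝ} {b r s μ : ℝ} (hr : 0 < r) (hs₁ : 1 ≤ s)
    (hs₂ : s ≤ 2) (hw : MemLp w 2 (volume.restrict (ball 0 (s * r))))
    (hb : tL2 n (fun x => w x - b * x (Fin.last n)) (s * r) ≤ μ * tL2 n w (s * r)) :
    (1 - (1 + 2 * √(2 ^ (n+1))) * μ) * tL2 n w (s * r) ≤ s * tL2 n w r := by
  set ℓ : E → ℝ := fun x => b * x (Fin.last n)
  set D : ℝ → ℝ := tL2 n (fun x => w x - ℓ x)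
  have hrs : r ≤ s * r := le_mul_of_one_le_left hr.le hs₁
  have hℓ : Continuous ℓ := by fun_prop
  have hw' : MemLp w 2 (volume.restrict (ball 0 r)) :=
    hw.mono_measure (Measure.restrict_mono (ball_subset_ball hrs) le_rfl)
  have hℓ_homog : ∀ t : ℝ, 0 < t → ∀ x, ℓ (t • x) = t * ℓ x := by
    intro t _ x
    simp only [ℓ, PiLp.smul_apply, smul_eq_mul]
    ring
  have hℓ_scale : tL2 n ℓ (s * r) = s * tL2 n ℓ r := by
    rw [tL2_of_homogeneous hℓ_homog (by positivity), tL2_of_homogeneous hℓ_homog hr]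
    ring
  have hfar : tL2 n w (s * r) ≤ tL2 n ℓ (s * r) + D (s * r) :=
    tL2_le_add_sub hw (hℓ.memLp_restrict_ball _ _ _)
  have hnear : tL2 n ℓ r ≤ tL2 n w r + D r := by
    have h := tL2_le_add_sub (hℓ.memLp_restrict_ball _ _ _) hw'
    rwa [tL2_sub_comm] at h
  have hmono : D r ≤ √(2 ^ (n+1)) * D (s * r) := by
    refine (tL2_le_of_le (u := fun x => w x - ℓ x) hr hrs
      (hw.sub (hℓ.memLp_restrict_ball _ _ _))).trans ?_
    rw [mul_div_cancel_right₀ _ hr.ne']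
    gcongr
    exact tL2_nonneg _ _
  have hc : 0 ≤ √(2 ^ (n+1)) * D (s * r) := mul_nonneg (Real.sqrt_nonneg _) (tL2_nonneg _ _)
  calc (1 - (1 + 2 * √(2 ^ (n+1))) * μ) * tL2 n w (s * r)
      ≤ tL2 n w (s * r) - (1 + 2 * √(2 ^ (n+1))) * D (s * r) := by
        have := mul_le_mul_of_nonneg_left hb (by positivity : (0 : ℝ) ≤ 1 + 2 * √(2 ^ (n+1)))
        linarith
    _ ≤ s * (tL2 n w r + √(2 ^ (n+1)) * D (s * r)) - 2 * (√(2 ^ (n+1)) * D (s * r)) := by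
        have := mul_le_mul_of_nonneg_left (hnear.trans (add_le_add_right hmono _))
          (by positivity : 0 ≤ s)
        linarith [hfar, hℓ_scale]
    _ ≤ s * tL2 n w r := by nlinarith

end

theorem le_pow_mul_of_dilation_step {f : ℝ → ℝ} {q : ℝ} (hq : 1 ≤ q) (hf₁ : 0 ≤ f 1)
    (hstep : ∀ r s, 1 ≤ r → 1 ≤ s → s ≤ 2 → f (s * r) ≤ q * s * f r) (k : ℕ) {R : ℝ}
    (h₁ : 1 ≤ R) (h₂ : R ≤ 2 ^ (k+1)) : f R ≤ q ^ (k+1) * R * f 1 := by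
  induction k generalizing R with
  | zero => simpa using hstep 1 R le_rfl h₁ (by simpa using h₂)
  | succ k ih =>
    rcases le_or_gt R (2 ^ (k+1)) with hR | hR
    · calc f R ≤ q ^ (k+1) * R * f 1 := ih h₁ hR
        _ ≤ q ^ (k+2) * R * f 1 := by gcongr ?_ * _ * _; exact pow_le_pow_right₀ hq (by omega)
    · have hR₂ : 1 ≤ R / 2 := by
        rw [le_div_iff₀ two_pos]
        linarith [one_le_pow₀ (M₀ := ℝ) one_le_two (n := k), pow_succ (2 : ℝ) k]
      have h := hstep (R / 2) 2 hR₂ one_le_two le_rfl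
      rw [mul_div_cancel₀ _ two_ne_zero] at h
      calc f R ≤ q * 2 * f (R / 2) := h
        _ ≤ q * 2 * (q ^ (k+1) * (R / 2) * f 1) := by
            gcongr
            exact ih hR₂ (by rw [div_le_iff₀ two_pos, ← pow_succ]; exact h₂)
        _ = q ^ (k+2) * R * f 1 := by ring

theorem le_rpow_mul_of_dilation_step {f : ℝ → ℝ} {β : ℝ} (hβ : 0 ≤ β) (hf₁ : 0 ≤ f 1)
    (hstep : ∀ r s, 1 ≤ r → 1 ≤ s → s ≤ 2 → f (s * r) ≤ 2 ^ (β / 2) * s * f r) {R : ℝ}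
    (hR : 2 ≤ R) : f R ≤ R ^ (1 + β) * f 1 := by
  obtain ⟨k, hkR, hRk⟩ := exists_nat_pow_near (one_le_two.trans hR) one_lt_two
  have hk : 1 ≤ k := by
    by_contra! hk
    interval_cases k
    norm_num at hRk
    linarith
  have hq : (1 : ℝ) ≤ 2 ^ (β / 2) := Real.one_le_rpow one_le_two (by positivity)
  have hqR : ((2 : ℝ) ^ (β / 2)) ^ (k+1) ≤ R ^ β :=
    calc ((2 : ℝ) ^ (β / 2)) ^ (k+1) ≤ ((2 : ℝ) ^ (β / 2)) ^ (2 * k) :=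
          pow_le_pow_right₀ hq (by omega)
      _ = ((2 : ℝ) ^ k) ^ β := by
          rw [← Real.rpow_mul_natCast zero_le_two, ← Real.rpow_natCast_mul zero_le_two]
          push_cast
          ring_nf
      _ ≤ R ^ β := Real.rpow_le_rpow (by positivity) hkR hβ
  calc f R ≤ ((2 : ℝ) ^ (β / 2)) ^ (k+1) * R * f 1 :=
        le_pow_mul_of_dilation_step hq hf₁ hstep k (by linarith) hRk.le
    _ ≤ R ^ β * R * f 1 := by gcongr
    _ = R ^ (1 + β) * f 1 := by rw [Real.rpow_add (by positivity), Real.rpow_one]; ring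

/-- Lemma 2.7: given `β > 0` there exists `μ = μ(β,n) > 0` such that any
`w ∈ L²_{loc}(ℝ^{n+1})` with `‖w - Pr(w,R)‖_{L̃²(B_R)} ≤ μ ‖w‖_{L̃²(B_R)}` for all `R ≥ 1`
satisfies `‖w‖_{L̃²(B_R)} ≤ R^{1+β} ‖w‖_{L̃²(B₁)}` for all `R ≥ 2`. -/
theorem growth_from_projection_control (n : ℕ) (β : ℝ) (hβ : 0 < β) :
    ∃ μ : ℝ, 0 < μ ∧
      ∀ (w : EuclideanSpace ℝ (Fin (n+1)) → ℝ) (a : ℝ → ℝ),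
        (∀ R : ℝ, 1 ≤ R →
          MemLp w 2 (volume.restrict (ball (0 : EuclideanSpace ℝ (Fin (n+1))) R))) →
        (∀ R : ℝ, 1 ≤ R → IsProj n w R (a R)) →
        (∀ R : ℝ, 1 ≤ R →
          tL2 n (fun x => w x - a R * x (Fin.last n)) R ≤ μ * tL2 n w R) →
        ∀ R : ℝ, 2 ≤ R → tL2 n w R ≤ R ^ ((1:ℝ) + β) * tL2 n w 1 := by
  set K := 1 + 2 * √(2 ^ (n+1)) with hK_def
  have hK : 0 < K := by positivity
  have hθ : (2 : ℝ) ^ (-(β / 2)) < 1 := Real.rpow_lt_one_of_one_lt_of_neg one_lt_two (by linarith)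
  refine ⟨(1 - 2 ^ (-(β / 2))) / K, div_pos (sub_pos.2 hθ) hK, ?_⟩
  intro w a hw _ hctrl R hR
  refine le_rpow_mul_of_dilation_step hβ.le (tL2_nonneg w 1) (fun r s hr hs₁ hs₂ => ?_) hR
  have hsr : 1 ≤ s * r := one_le_mul_of_one_le_of_one_le hs₁ hr
  have h := tL2_dilate_le_of_linear_approx (zero_lt_one.trans_le hr) hs₁ hs₂ (hw _ hsr) (hctrl _ hsr)
  rw [← hK_def, mul_div_cancel₀ _ hK.ne', sub_sub_cancel, Real.rpow_neg zero_le_two,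
    inv_mul_le_iff₀ (by positivity)] at h
  linarith
end

section
/- Every two-dimensional solution $v(x_n,x_{n+1})$ of the mixed boundary value problem ($\Delta v=0$ in $B_1\setminus\{x_{n+1}=0\}$, $\partial_{n+1}^+v+\partial_{n+1}^-v=0$ on $\{x_{n+1}=0,x_n>0\}$, $v=0$ on $\{x_{n+1}=0,x_n\leq 0\}$) that is positively homogeneous is, up to scalar multiples, one of: $x_{n+1}$; $\mathrm{Re}(x_n+i|x_{n+1}|)^{\kappa}$ with $\kappa=(2m+1)/2$, $m\in\mathbb{N}$; or $\mathrm{Im}(x_n+ix_{n+1})^{\kappa}$ with $\kappa\in\mathbb{N}$. -/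
/-!
Write `h(θ) = v(cos θ, sin θ)`. For `v` homogeneous of degree `κ`, Euler's identities express the
radial derivatives of `v` through `v`, so `Δv = 0` becomes `h'' = -κ² h` on each open half circle
and `h = A cos κθ + B sin κθ` on `[0, π]`, `h = A' cos κθ + B' sin κθ` on `[-π, 0]`. Continuity
gives `A = A'`; since `v(1, t) = (1 + t²)^{κ/2} h(arctan t)`, the transmission condition on the
positive axis gives `κB = κB'`; the Dirichlet condition at `θ = ±π` gives `A cos κπ = B sin κπ = 0`.
Continuity at the origin forces `κ > 0`, so either `B = 0` and `κ ∈ ℕ + 1/2` (the `Re` solutions),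
or `A = 0` and `κ ∈ ℕ` (the `Im` solutions).
-/

open Set

/-- The (pointwise) Laplacian of `f : ℝ² → ℝ`, via iterated coordinate derivatives. -/
noncomputable def lap2 (f : ℝ × ℝ → ℝ) (x : ℝ × ℝ) : ℝ :=
  deriv (fun t => deriv (fun s => f (s, x.2)) t) x.1
    + deriv (fun t => deriv (fun s => f (x.1, s)) t) x.2

/-- One-sided normal derivative from the upper half-plane at `(s,0)` (outer normal `-e₂`). -/
noncomputable def nUp (f : ℝ × ℝ → ℝ) (s : ℝ) : ℝ :=
  -(derivWithin (fun t => f (s, t)) (Ioi 0) 0)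

/-- One-sided normal derivative from the lower half-plane at `(s,0)` (outer normal `e₂`). -/
noncomputable def nDown (f : ℝ × ℝ → ℝ) (s : ℝ) : ℝ :=
  derivWithin (fun t => f (s, t)) (Iio 0) 0

/-- `Re(x_n + i|x_{n+1}|)^κ` (principal branch), i.e. `ρ^κ cos(κθ)` with `θ ∈ [0,π]`. -/
noncomputable def ReP (κ : ℝ) (x : ℝ × ℝ) : ℝ :=
  (((x.1 : ℂ) + (|x.2| : ℝ) * Complex.I) ^ (κ : ℂ)).re

open Filter Topology Real

def IsPosHomogeneous {E : Type*} [SMul ℝ E] (v : E → ℝ) (κ : ℝ) : Prop :=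
  ∀ lam : ℝ, 0 < lam → ∀ x : E, v (lam • x) = lam ^ κ * v x

lemma hasDerivAt_smul_const_one {E : Type*} [NormedAddCommGroup E] [NormedSpace ℝ E] (x : E) :
    HasDerivAt (fun r : ℝ => r • x) x 1 := by
  simpa using (hasDerivAt_id (1 : ℝ)).smul_const x

namespace IsPosHomogeneous

variable {E : Type*} {v : E → ℝ} {κ : ℝ}

lemma pos_of_ne_zero [TopologicalSpace E] [AddCommGroup E] [Module ℝ E] [ContinuousSMul ℝ E]
    (hv : IsPosHomogeneous v κ) (hcont : ContinuousAt v 0) (h0 : v 0 = 0) {x : E}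
    (hx : v x ≠ 0) : 0 < κ := by
  by_contra! hκ
  have hlim : Tendsto (fun lam : ℝ => |v (lam • x)|) (𝓝[>] 0) (𝓝 0) := by
    have hsmul : Tendsto (fun lam : ℝ => lam • x) (𝓝[>] 0) (𝓝 0) := by
      simpa using (tendsto_nhdsWithin_of_tendsto_nhds (tendsto_id (x := 𝓝 (0 : ℝ)))).smul_const x
    simpa [h0] using (hcont.tendsto.comp hsmul).abs
  have hbound : ∀ᶠ lam in 𝓝[>] (0 : ℝ), |v x| ≤ |v (lam • x)| := by
    filter_upwards [Ioo_mem_nhdsGT one_pos] with lam hlam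
    rw [hv lam hlam.1, abs_mul, abs_of_pos (rpow_pos_of_pos hlam.1 κ)]
    exact le_mul_of_one_le_left (abs_nonneg _)
      (one_le_rpow_of_pos_of_le_one_of_nonpos hlam.1 hlam.2.le hκ)
  exact hx (abs_nonpos_iff.mp (ge_of_tendsto hlim hbound))

variable [NormedAddCommGroup E] [NormedSpace ℝ E]

lemma fderiv_apply_self (hv : IsPosHomogeneous v κ) {x : E} (hx : DifferentiableAt ℝ v x) :
    fderiv ℝ v x x = κ * v x := by
  have hchain : HasDerivAt (fun r : ℝ => v (r • x)) (fderiv ℝ v x x) 1 :=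
    hx.hasFDerivAt.comp_hasDerivAt_of_eq 1 (hasDerivAt_smul_const_one x) (one_smul ℝ x).symm
  have hscal : HasDerivAt (fun r : ℝ => v (r • x)) (κ * v x) 1 := by
    have := ((hasDerivAt_id (1 : ℝ)).rpow_const (p := κ) (Or.inl one_ne_zero)).mul_const (v x)
    refine (this.congr_of_eventuallyEq ?_).congr_deriv (by simp)
    filter_upwards [Ioi_mem_nhds one_pos] with r hr using hv r hr x
  exact hchain.unique hscal

lemma fderiv_fderiv_apply_self (hv : IsPosHomogeneous v κ) {x : E}
    (hd : ∀ r : ℝ, 0 < r → DifferentiableAt ℝ v (r • x))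
    (hx : DifferentiableAt ℝ (fderiv ℝ v) x) :
    fderiv ℝ (fderiv ℝ v) x x x = κ * (κ - 1) * v x := by
  have hradial : ∀ r : ℝ, 0 < r → fderiv ℝ v (r • x) x = κ * r ^ (κ - 1) * v x := by
    intro r hr
    have h := hv.fderiv_apply_self (hd r hr)
    rw [map_smul, hv r hr, smul_eq_mul] at h
    rw [rpow_sub_one hr.ne']
    field_simp
    linarith
  have hchain :
      HasDerivAt (fun r : ℝ => fderiv ℝ v (r • x) x) (fderiv ℝ (fderiv ℝ v) x x x) 1 := by
    simpa using (hx.hasFDerivAt.comp_hasDerivAt_of_eq 1 (hasDerivAt_smul_const_one x)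
      (one_smul ℝ x).symm).clm_apply (hasDerivAt_const 1 x)
  have hscal : HasDerivAt (fun r : ℝ => fderiv ℝ v (r • x) x) (κ * (κ - 1) * v x) 1 := by
    have := (((hasDerivAt_id (1 : ℝ)).rpow_const (p := κ - 1) (Or.inl one_ne_zero)).const_mul
      κ).mul_const (v x)
    refine (this.congr_of_eventuallyEq ?_).congr_deriv (by simp)
    filter_upwards [Ioi_mem_nhds one_pos] with r hr using hradial r hr
  exact hchain.unique hscal

end IsPosHomogeneous

lemma deriv_deriv_comp_eq_fderiv_fderiv {f : ℝ × ℝ → ℝ} {x e : ℝ × ℝ} {c : ℝ → ℝ × ℝ}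
    {t₀ : ℝ} (hc : ∀ t, HasDerivAt c e t) (hct₀ : c t₀ = x)
    (hf : ∀ᶠ y in 𝓝 x, DifferentiableAt ℝ f y) (hf' : DifferentiableAt ℝ (fderiv ℝ f) x) :
    deriv (fun t => deriv (fun s => f (c s)) t) t₀ = fderiv ℝ (fderiv ℝ f) x e e := by
  have hcont : Tendsto c (𝓝 t₀) (𝓝 x) := hct₀ ▸ (hc t₀).continuousAt.tendsto
  have hinner : (fun t => deriv (fun s => f (c s)) t) =ᶠ[𝓝 t₀] fun t => fderiv ℝ f (c t) e := by
    filter_upwards [hcont.eventually hf] with t ht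
    exact (ht.hasFDerivAt.comp_hasDerivAt t (hc t)).deriv
  rw [hinner.deriv_eq]
  exact ((hf'.hasFDerivAt.comp_hasDerivAt_of_eq t₀ (hc t₀) hct₀.symm).clm_apply
    (hasDerivAt_const t₀ e)).deriv.trans (by simp)

lemma lap2_eq_fderiv_fderiv {f : ℝ × ℝ → ℝ} {x : ℝ × ℝ}
    (hf : ∀ᶠ y in 𝓝 x, DifferentiableAt ℝ f y) (hf' : DifferentiableAt ℝ (fderiv ℝ f) x) :
    lap2 f x = fderiv ℝ (fderiv ℝ f) x (1, 0) (1, 0) + fderiv ℝ (fderiv ℝ f) x (0, 1) (0, 1) := by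
  have h₁ : ∀ t, HasDerivAt (fun s : ℝ => (s, x.2)) ((1 : ℝ), (0 : ℝ)) t := fun t =>
    (hasDerivAt_id t).prodMk (hasDerivAt_const t x.2)
  have h₂ : ∀ t, HasDerivAt (fun s : ℝ => (x.1, s)) ((0 : ℝ), (1 : ℝ)) t := fun t =>
    (hasDerivAt_const t x.1).prodMk (hasDerivAt_id t)
  rw [lap2, deriv_deriv_comp_eq_fderiv_fderiv h₁ rfl hf hf',
    deriv_deriv_comp_eq_fderiv_fderiv h₂ rfl hf hf']

lemma apply_self_add_apply_self_of_rotation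
    (H : ℝ × ℝ →L[ℝ] ℝ × ℝ →L[ℝ] ℝ) {c s : ℝ} (hcs : c ^ 2 + s ^ 2 = 1) :
    H (c, s) (c, s) + H (-s, c) (-s, c) = H (1, 0) (1, 0) + H (0, 1) (0, 1) := by
  have hexpand : ∀ a b : ℝ, H (a, b) (a, b) =
      a ^ 2 * H (1, 0) (1, 0) + a * b * (H (1, 0) (0, 1) + H (0, 1) (1, 0))
        + b ^ 2 * H (0, 1) (0, 1) := by
    intro a b
    have hab : ((a, b) : ℝ × ℝ) = a • ((1 : ℝ), (0 : ℝ)) + b • ((0 : ℝ), (1 : ℝ)) := by simp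
    rw [hab]
    simp only [map_add, map_smul, add_apply, smul_apply, smul_eq_mul]
    ring
  rw [hexpand c s, hexpand (-s) c]
  linear_combination (H (1, 0) (1, 0) + H (0, 1) (0, 1)) * hcs

noncomputable def circleTrace (v : ℝ × ℝ → ℝ) (θ : ℝ) : ℝ := v (cos θ, sin θ)

noncomputable def angularDeriv (v : ℝ × ℝ → ℝ) (θ : ℝ) : ℝ :=
  fderiv ℝ v (cos θ, sin θ) (-sin θ, cos θ)

section CircleTrace

variable {v : ℝ × ℝ → ℝ} {U : Set (ℝ × ℝ)} {θ : ℝ}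

lemma hasDerivAt_cos_sin (θ : ℝ) : HasDerivAt (fun ψ => (cos ψ, sin ψ)) (-sin θ, cos θ) θ :=
  (hasDerivAt_cos θ).prodMk (hasDerivAt_sin θ)

lemma hasDerivAt_circleTrace (hU : IsOpen U) (hv : DifferentiableOn ℝ v U)
    (hθ : (cos θ, sin θ) ∈ U) : HasDerivAt (circleTrace v) (angularDeriv v θ) θ :=
  (hv.differentiableAt (hU.mem_nhds hθ)).hasFDerivAt.comp_hasDerivAt θ (hasDerivAt_cos_sin θ)

/-- The tangential second derivative is the Laplacian minus the radial one, and Euler's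
identities express the radial derivatives through `v` itself. -/
lemma hasDerivAt_angularDeriv {κ : ℝ} (hU : IsOpen U)
    (hcone : ∀ r : ℝ, 0 < r → ∀ x ∈ U, r • x ∈ U) (hv : ContDiffOn ℝ 2 v U)
    (hhom : IsPosHomogeneous v κ) (hθ : (cos θ, sin θ) ∈ U) (hlap : lap2 v (cos θ, sin θ) = 0) :
    HasDerivAt (angularDeriv v) (-κ ^ 2 * circleTrace v θ) θ := by
  set p : ℝ × ℝ := (cos θ, sin θ)
  have hdiff : ∀ x ∈ U, DifferentiableAt ℝ v x := fun x hx =>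
    (hv.differentiableOn two_ne_zero).differentiableAt (hU.mem_nhds hx)
  have hdiff' : DifferentiableAt ℝ (fderiv ℝ v) p :=
    ((hv.fderiv_of_isOpen hU (by norm_num)).differentiableOn one_ne_zero).differentiableAt
      (hU.mem_nhds hθ)
  set H := fderiv ℝ (fderiv ℝ v) p
  have hderiv : HasDerivAt (angularDeriv v)
      (H (-sin θ, cos θ) (-sin θ, cos θ) + fderiv ℝ v p (-p)) θ := by
    have hperp : HasDerivAt (fun ψ => ((-sin ψ, cos ψ) : ℝ × ℝ)) (-p) θ := by
      simpa [p] using (hasDerivAt_sin θ).neg.prodMk (hasDerivAt_cos θ)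
    have hD : HasDerivAt (fun ψ => fderiv ℝ v (cos ψ, sin ψ)) (H (-sin θ, cos θ)) θ :=
      hdiff'.hasFDerivAt.comp_hasDerivAt θ (hasDerivAt_cos_sin θ)
    exact hD.clm_apply hperp
  have hradial : fderiv ℝ v p (-p) = -(κ * v p) := by
    rw [map_neg, hhom.fderiv_apply_self (hdiff p hθ)]
  have htangential : H (-sin θ, cos θ) (-sin θ, cos θ) = -(κ * (κ - 1) * v p) := by
    have hrot := apply_self_add_apply_self_of_rotation H (cos_sq_add_sin_sq θ)
    have hlap' := lap2_eq_fderiv_fderiv ((hU.eventually_mem hθ).mono hdiff) hdiff'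
    have hEuler := hhom.fderiv_fderiv_apply_self (fun r hr => hdiff _ (hcone r hr p hθ)) hdiff'
    rw [hlap] at hlap'
    linarith
  convert hderiv using 1
  rw [hradial, htangential, circleTrace]
  ring

end CircleTrace

lemma hasDerivAt_cos_add_sin (κ A B θ : ℝ) :
    HasDerivAt (fun ψ => A * cos (κ * ψ) + B * sin (κ * ψ))
      (κ * (-A * sin (κ * θ) + B * cos (κ * θ))) θ := by
  have hlin : HasDerivAt (fun ψ : ℝ => κ * ψ) κ θ := by
    simpa using (hasDerivAt_id θ).const_mul κ
  exact ((((hasDerivAt_cos (κ * θ)).comp θ hlin).const_mul A).add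
    (((hasDerivAt_sin (κ * θ)).comp θ hlin).const_mul B)).congr_deriv (by ring)

lemma eqOn_cos_add_sin_of_hasDerivAt {κ : ℝ} (hκ : κ ≠ 0) {h h' : ℝ → ℝ} {a b : ℝ}
    (hab : a < b) (hc : ContinuousOn h (Icc a b))
    (hd : ∀ θ ∈ Ioo a b, HasDerivAt h (h' θ) θ ∧ HasDerivAt h' (-κ ^ 2 * h θ) θ) :
    ∃ A B : ℝ, EqOn h (fun θ => A * cos (κ * θ) + B * sin (κ * θ)) (Icc a b) := by
  obtain ⟨t₀, ht₀⟩ : (Ioo a b).Nonempty := nonempty_Ioo.mpr hab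
  set C := h' t₀ / κ
  set A := h t₀ * cos (κ * t₀) - C * sin (κ * t₀)
  set B := h t₀ * sin (κ * t₀) + C * cos (κ * t₀)
  refine ⟨A, B, ?_⟩
  set L : ℝ × ℝ →L[ℝ] ℝ × ℝ :=
    (ContinuousLinearMap.snd ℝ ℝ ℝ).prod ((-κ ^ 2) • ContinuousLinearMap.fst ℝ ℝ ℝ)
  have hL : ∀ q : ℝ × ℝ, L q = (q.2, -κ ^ 2 * q.1) := fun q => by simp [L]
  set g : ℝ → ℝ × ℝ := fun θ =>
    (A * cos (κ * θ) + B * sin (κ * θ), κ * (-A * sin (κ * θ) + B * cos (κ * θ)))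
  have hg : ∀ θ, HasDerivAt g (L (g θ)) θ := fun θ => by
    convert (hasDerivAt_cos_add_sin κ A B θ).prodMk
      (hasDerivAt_cos_add_sin κ (κ * B) (-κ * A) θ) using 1
    · funext ψ; simp only [g]; congr 1; ring
    · rw [hL]; exact Prod.ext rfl (by simp only [g]; ring)
  have hh : ∀ θ ∈ Ioo a b, HasDerivAt (fun θ => (h θ, h' θ)) (L (h θ, h' θ)) θ :=
    fun θ hθ => by rw [hL]; exact (hd θ hθ).1.prodMk (hd θ hθ).2
  have hinit : ((h t₀, h' t₀) : ℝ × ℝ) = g t₀ := by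
    have hC : h' t₀ = κ * C := (mul_div_cancel₀ _ hκ).symm
    simp only [g, A, B, Prod.mk.injEq]
    constructor
    · linear_combination (-h t₀) * sin_sq_add_cos_sq (κ * t₀)
    · rw [hC]; linear_combination (-(κ * C)) * sin_sq_add_cos_sq (κ * t₀)
  have hEq : EqOn h (fun θ => (g θ).1) (Ioo a b) := fun θ hθ => congrArg Prod.fst
    (ODE_solution_unique_of_mem_Ioo (v := fun _ q => L q) (s := fun _ => univ) (K := ‖L‖₊)
      (fun _ _ => L.lipschitz.lipschitzOnWith) ht₀ (fun t ht => ⟨hh t ht, trivial⟩)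
      (fun t _ => ⟨hg t, trivial⟩) hinit hθ)
  exact hEq.of_subset_closure hc (by fun_prop) Ioo_subset_Icc_self (closure_Ioo hab.ne).ge

namespace IsPosHomogeneous

variable {v : ℝ × ℝ → ℝ} {κ : ℝ}

lemma apply_one_eq_circleTrace_arctan (hv : IsPosHomogeneous v κ) (t : ℝ) :
    v (1, t) = √(1 + t ^ 2) ^ κ * circleTrace v (arctan t) := by
  have hr : 0 < √(1 + t ^ 2) := sqrt_pos.mpr (by positivity)
  rw [circleTrace, ← hv _ hr, cos_arctan, sin_arctan]
  congr 1
  ext <;> simp [field]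

lemma hasDerivWithinAt_vertical (hv : IsPosHomogeneous v κ) {g : ℝ → ℝ} {d : ℝ}
    (hg : HasDerivAt g d 0) {s : Set ℝ} (hs₀ : 0 ∈ s)
    (hs : ∀ t ∈ s, circleTrace v (arctan t) = g (arctan t)) :
    HasDerivWithinAt (fun t => v (1, t)) d s 0 := by
  have hrad : HasDerivAt (fun t : ℝ => √(1 + t ^ 2) ^ κ) 0 0 := by
    simpa using ((((hasDerivAt_id (0 : ℝ)).pow 2).const_add 1).sqrt (by simp)).rpow_const
      (p := κ) (Or.inl (by simp))
  have hang : HasDerivAt (fun t => g (arctan t)) d 0 :=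
    (hg.comp_of_eq 0 (hasDerivAt_arctan 0) arctan_zero.symm).congr_deriv (by simp)
  refine ((hrad.mul hang).hasDerivWithinAt.congr_of_mem (fun t ht => ?_) hs₀).congr_deriv
    (by simp)
  rw [hv.apply_one_eq_circleTrace_arctan, hs t ht, Pi.mul_apply]

lemma apply_re_im (hv : IsPosHomogeneous v κ) (hκ : κ ≠ 0) (hv₀ : v 0 = 0) (z : ℂ) :
    v (z.re, z.im) = ‖z‖ ^ κ * circleTrace v (Complex.arg z) := by
  rcases eq_or_ne z 0 with rfl | hz
  · simpa [zero_rpow hκ, Prod.mk_zero_zero] using hv₀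
  have hz' : ‖z‖ ≠ 0 := norm_ne_zero_iff.mpr hz
  rw [circleTrace, ← hv _ (norm_pos_iff.mpr hz), Complex.cos_arg hz, Complex.sin_arg]
  congr 1
  ext <;> simp [field]

end IsPosHomogeneous

lemma exists_circleTrace_eq_cos_add_sin {v : ℝ × ℝ → ℝ} {κ : ℝ} (hκ : κ ≠ 0)
    (hcont : Continuous v) (hsm : ContDiffOn ℝ 2 v {x : ℝ × ℝ | x.2 ≠ 0})
    (hharm : ∀ x : ℝ × ℝ, x.2 ≠ 0 → lap2 v x = 0) (hneu : nUp v 1 + nDown v 1 = 0)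
    (hv : IsPosHomogeneous v κ) :
    ∃ A B : ℝ,
      EqOn (circleTrace v) (fun θ => A * cos (κ * θ) + B * sin (κ * θ)) (Icc (-π) π) := by
  have hU : IsOpen {x : ℝ × ℝ | x.2 ≠ 0} := isOpen_ne.preimage continuous_snd
  have hcone : ∀ r : ℝ, 0 < r → ∀ x ∈ {x : ℝ × ℝ | x.2 ≠ 0}, r • x ∈ {x : ℝ × ℝ | x.2 ≠ 0} :=
    fun r hr x hx => mul_ne_zero hr.ne' hx
  have hode : ∀ θ, sin θ ≠ 0 → HasDerivAt (circleTrace v) (angularDeriv v θ) θ ∧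
      HasDerivAt (angularDeriv v) (-κ ^ 2 * circleTrace v θ) θ := fun θ hθ =>
    ⟨hasDerivAt_circleTrace hU (hsm.differentiableOn two_ne_zero) hθ,
      hasDerivAt_angularDeriv hU hcone hsm hv hθ (hharm _ hθ)⟩
  have hc : Continuous (circleTrace v) :=
    hcont.comp (continuous_cos.prodMk continuous_sin)
  obtain ⟨A, B, hup⟩ := eqOn_cos_add_sin_of_hasDerivAt hκ pi_pos hc.continuousOn
    fun θ hθ => hode θ (sin_pos_of_pos_of_lt_pi hθ.1 hθ.2).ne'
  obtain ⟨A', B', hdown⟩ := eqOn_cos_add_sin_of_hasDerivAt hκ (neg_lt_zero.mpr pi_pos)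
    hc.continuousOn fun θ hθ => hode θ (sin_neg_of_neg_of_neg_pi_lt hθ.2 hθ.1).ne
  have hA : A' = A := by
    simpa using (hdown ⟨neg_nonpos.mpr pi_pos.le, le_rfl⟩).symm.trans (hup ⟨le_rfl, pi_pos.le⟩)
  have hB : B' = B := by
    have hderivUp : HasDerivWithinAt (fun t => v (1, t)) (κ * B) (Ici 0) 0 :=
      hv.hasDerivWithinAt_vertical ((hasDerivAt_cos_add_sin κ A B 0).congr_deriv (by simp))
        self_mem_Ici fun t ht =>
          hup ⟨arctan_nonneg.mpr ht, by linarith [arctan_lt_pi_div_two t, pi_pos]⟩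
    have hderivDown : HasDerivWithinAt (fun t => v (1, t)) (κ * B') (Iic 0) 0 :=
      hv.hasDerivWithinAt_vertical ((hasDerivAt_cos_add_sin κ A' B' 0).congr_deriv (by simp))
        self_mem_Iic fun t ht =>
          hdown ⟨by linarith [neg_pi_div_two_lt_arctan t, pi_pos], arctan_le_zero.mpr ht⟩
    rw [nUp, nDown,
      (hderivUp.mono Ioi_subset_Ici_self).derivWithin (uniqueDiffWithinAt_Ioi 0),
      (hderivDown.mono Iio_subset_Iic_self).derivWithin (uniqueDiffWithinAt_Iio 0)] at hneu
    exact mul_left_cancel₀ hκ (by linarith)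
  refine ⟨A, B, fun θ hθ => ?_⟩
  rcases le_total 0 θ with hθ₀ | hθ₀
  · exact hup ⟨hθ₀, hθ.2⟩
  · simpa [hA, hB] using hdown ⟨hθ.1, hθ₀⟩

lemma ReP_re_im (κ : ℝ) (z : ℂ) : ReP κ (z.re, z.im) = ‖z‖ ^ κ * cos (κ * Complex.arg z) := by
  rw [ReP, Complex.cpow_ofReal_re, mul_comm κ]
  rcases le_or_gt 0 z.im with him | him
  · simp [abs_of_nonneg him, Complex.re_add_im]
  · have hconj : (z.re : ℂ) + (|z.im| : ℝ) * Complex.I = (starRingEnd ℂ) z := by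
      apply Complex.ext <;> simp [abs_of_neg him]
    have harg : Complex.arg z ≠ π := fun h => him.ne (Complex.arg_eq_pi_iff.mp h).2
    simp [hconj, Complex.arg_conj, harg]

lemma im_pow_eq (z : ℂ) (k : ℕ) : (z ^ k).im = ‖z‖ ^ (k : ℝ) * sin (k * Complex.arg z) := by
  simpa [mul_comm (Complex.arg z)] using Complex.cpow_ofReal_im z k

lemma exists_nat_eq_of_sin_mul_pi_eq_zero {κ : ℝ} (hκ : 0 < κ) (h : sin (κ * π) = 0) :
    ∃ k : ℕ, κ = k := by
  obtain ⟨n, hn⟩ := sin_eq_zero_iff.mp h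
  have hκn : κ = n := (mul_right_cancel₀ pi_ne_zero hn).symm
  have hn₀ : 0 < n := by exact_mod_cast hκn ▸ hκ
  lift n to ℕ using hn₀.le
  exact ⟨n, by rw [hκn, Int.cast_natCast]⟩

lemma exists_nat_eq_half_odd_of_cos_mul_pi_eq_zero {κ : ℝ} (hκ : 0 < κ)
    (h : cos (κ * π) = 0) : ∃ m : ℕ, κ = (2 * m + 1) / 2 := by
  obtain ⟨n, hn⟩ := cos_eq_zero_iff.mp h
  have hκn : κ = (2 * n + 1) / 2 := by
    apply mul_right_cancel₀ pi_ne_zero; rw [hn]; ring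
  have hn₀ : (-1 : ℤ) < n := by exact_mod_cast (by linarith : (-1 : ℝ) < n)
  lift n to ℕ using by omega
  exact ⟨n, by rw [hκn, Int.cast_natCast]⟩

lemma classification_of_polar {v : ℝ × ℝ → ℝ} {κ A B : ℝ} (hκ : 0 < κ)
    (hpolar : ∀ z : ℂ, v (z.re, z.im) =
      ‖z‖ ^ κ * (A * cos (κ * Complex.arg z) + B * sin (κ * Complex.arg z)))
    (hA : A * cos (κ * π) = 0) (hB : B * sin (κ * π) = 0) :
    ∃ c : ℝ,
      (∀ x : ℝ × ℝ, v x = c * x.2)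
      ∨ (∃ m : ℕ, ∀ x : ℝ × ℝ, v x = c * ReP ((2*(m:ℝ)+1)/2) x)
      ∨ (∃ k : ℕ, ∀ x : ℝ × ℝ, v x = c * (((x.1 : ℂ) + (x.2 : ℝ) * Complex.I) ^ k).im) := by
  by_cases hcos : cos (κ * π) = 0
  · have hB₀ : B = 0 := by
      have hsin : sin (κ * π) ≠ 0 := fun h => by simpa [h, hcos] using sin_sq_add_cos_sq (κ * π)
      simpa [hsin] using hB
    obtain ⟨m, rfl⟩ := exists_nat_eq_half_odd_of_cos_mul_pi_eq_zero hκ hcos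
    refine ⟨A, Or.inr (Or.inl ⟨m, fun x => ?_⟩)⟩
    obtain ⟨z, rfl⟩ := Complex.equivRealProd.surjective x
    rw [Complex.equivRealProd_apply, hpolar, ReP_re_im, hB₀]
    ring
  have hA₀ : A = 0 := by simpa [hcos] using hA
  rcases eq_or_ne B 0 with hB₀ | hB₀
  · refine ⟨0, Or.inl fun x => ?_⟩
    obtain ⟨z, rfl⟩ := Complex.equivRealProd.surjective x
    rw [Complex.equivRealProd_apply, hpolar, hA₀, hB₀]
    ring
  obtain ⟨k, rfl⟩ := exists_nat_eq_of_sin_mul_pi_eq_zero hκ (by simpa [hB₀] using hB)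
  refine ⟨B, Or.inr (Or.inr ⟨k, fun x => ?_⟩)⟩
  obtain ⟨z, rfl⟩ := Complex.equivRealProd.surjective x
  simp only [Complex.equivRealProd_apply, Complex.re_add_im]
  rw [hpolar, im_pow_eq, hA₀]
  ring

theorem twoD_classification_general (v : ℝ × ℝ → ℝ)
    (hcont : Continuous v)
    (hsm : ContDiffOn ℝ 2 v {x : ℝ × ℝ | x.2 ≠ 0})
    (hharm : ∀ x : ℝ × ℝ, x.2 ≠ 0 → lap2 v x = 0)
    (hneu : ∀ s : ℝ, 0 < s → nUp v s + nDown v s = 0)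
    (hdir : ∀ s : ℝ, s ≤ 0 → v (s, 0) = 0)
    (hhom : ∃ κ : ℝ, ∀ lam : ℝ, 0 < lam → ∀ x : ℝ × ℝ, v (lam • x) = lam ^ κ * v x) :
    ∃ c : ℝ,
      (∀ x : ℝ × ℝ, v x = c * x.2)
      ∨ (∃ m : ℕ, ∀ x : ℝ × ℝ, v x = c * ReP ((2*(m:ℝ)+1)/2) x)
      ∨ (∃ k : ℕ, ∀ x : ℝ × ℝ, v x = c * (((x.1 : ℂ) + (x.2 : ℝ) * Complex.I) ^ k).im) := by
  obtain ⟨κ, hv⟩ := hhom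
  have hv₀ : v 0 = 0 := hdir 0 le_rfl
  by_cases hzero : ∀ x, v x = 0
  · exact ⟨0, Or.inl fun x => by rw [hzero x, zero_mul]⟩
  obtain ⟨x₀, hx₀⟩ := not_forall.mp hzero
  have hκ : 0 < κ := IsPosHomogeneous.pos_of_ne_zero hv hcont.continuousAt hv₀ hx₀
  obtain ⟨A, B, hAB⟩ :=
    exists_circleTrace_eq_cos_add_sin hκ.ne' hcont hsm hharm (hneu 1 one_pos) hv
  have hpolar : ∀ z : ℂ, v (z.re, z.im) =
      ‖z‖ ^ κ * (A * cos (κ * Complex.arg z) + B * sin (κ * Complex.arg z)) := fun z => by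
    rw [IsPosHomogeneous.apply_re_im hv hκ.ne' hv₀,
      hAB ⟨(Complex.neg_pi_lt_arg z).le, Complex.arg_le_pi z⟩]
  have hπ : circleTrace v π = 0 ∧ circleTrace v (-π) = 0 := by
    simp [circleTrace, hdir (-1) (by norm_num)]
  rw [hAB ⟨by linarith [pi_pos], le_rfl⟩, hAB ⟨le_rfl, by linarith [pi_pos]⟩] at hπ
  simp only [mul_neg, cos_neg, sin_neg] at hπ
  exact classification_of_polar hκ hpolar (by linarith [hπ.1, hπ.2]) (by linarith [hπ.1, hπ.2])

/-- two-dimensional classification, Step 2 of the proof of Lemma 5.1: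
every positively homogeneous two-dimensional solution of the mixed Dirichlet–Neumann problem
(`Δv = 0` off `{x₂ = 0}`, `∂₂⁺v + ∂₂⁻v = 0` on `{x₂ = 0, x₁ > 0}`, `v = 0` on
`{x₂ = 0, x₁ ≤ 0}`) is, up to a scalar multiple, `x₂`, `Re(x₁+i|x₂|)^{(2m+1)/2}` or
`Im(x₁+ix₂)^κ` with `κ ∈ ℕ`. -/
theorem twoD_classification (v : ℝ × ℝ → ℝ)
    (hcont : Continuous v)
    (hsm : ContDiffOn ℝ 2 v {x : ℝ × ℝ | x.2 ≠ 0})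
    (hharm : ∀ x : ℝ × ℝ, x.2 ≠ 0 → lap2 v x = 0)
    (hdUp : ∀ s : ℝ, 0 < s → DifferentiableWithinAt ℝ (fun t => v (s, t)) (Ioi 0) 0)
    (hdDown : ∀ s : ℝ, 0 < s → DifferentiableWithinAt ℝ (fun t => v (s, t)) (Iio 0) 0)
    (hneu : ∀ s : ℝ, 0 < s → nUp v s + nDown v s = 0)
    (hdir : ∀ s : ℝ, s ≤ 0 → v (s, 0) = 0)
    (hhom : ∃ κ : ℝ, ∀ lam : ℝ, 0 < lam → ∀ x : ℝ × ℝ, v (lam • x) = lam ^ κ * v x) :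
    ∃ c : ℝ,
      (∀ x : ℝ × ℝ, v x = c * x.2)
      ∨ (∃ m : ℕ, ∀ x : ℝ × ℝ, v x = c * ReP ((2*(m:ℝ)+1)/2) x)
      ∨ (∃ k : ℕ, ∀ x : ℝ × ℝ, v x = c * (((x.1 : ℂ) + (x.2 : ℝ) * Complex.I) ^ k).im) :=
  twoD_classification_general v hcont hsm hharm hneu hdir hhom
end

section
/- For each unit vector $\nu_\theta=e_i\sin\theta+e_n\cos\theta$ ($1\leq i\leq n-1$) define $p^{\nu_\theta}(x)=\mathrm{Re}((x'\cdot\nu_\theta)+i|x_{n+1}|)^{3/2}$. Then $\lim_{\theta\to 0}\frac{p^{\nu_\theta}(x)-p^{e_n}(x)}{\theta}=\frac{3}{2}x_i\,\mathrm{Re}(x_n+i|x_{n+1}|)^{1/2}$, uniformly on $\overline{B_1}$. -/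
/-!
Write `w = x_n + i|x_{n+1}|` and `z_θ = x'·ν_θ + i|x_{n+1}|`; both lie in the closed upper
half-plane and `z_θ - w = x_i sin θ + x_n (cos θ - 1) = θ x_i + O(θ²)`. The principal square roots
`u = z_θ^{1/2}`, `v = w^{1/2}` lie in the closed first quadrant, so `Re(u v̄) ≥ 0`, which gives
`|u - v| ≤ |u + v|` and `|u| ≤ |u + v|`. Since
`z_θ^{3/2} - w^{3/2} - (3/2) w^{1/2} (z_θ - w) = (u - v)² (2u + v) / 2`, this Taylor remainder is
at most `|z_θ - w|^{3/2}`. Hence the difference quotient differs from `(3/2) x_i Re w^{1/2}` by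
`O(|θ|^{1/2})`, uniformly for `|x| ≤ 1`.
-/

open Metric Topology

/-- `p^{ν_θ}(x) = Re((x'·ν_θ) + i|x_{n+1}|)^{3/2}` for the rotated direction
`ν_θ = e_i sin θ + e_n cos θ`, on `ℝ^{(n+1)+1}` with `x_{n+1}` the last coordinate and
`x_n` the coordinate of index `n`. -/
noncomputable def pRot (n : ℕ) (i : Fin (n+2)) (θ : ℝ)
    (x : EuclideanSpace ℝ (Fin (n+2))) : ℝ :=
  ((((x i * Real.sin θ + x ⟨n, by omega⟩ * Real.cos θ : ℝ) : ℂ)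
      + ((|x (Fin.last (n+1))| : ℝ) : ℂ) * Complex.I) ^ ((3:ℂ)/2)).re

open Filter RealInnerProductSpace

section InnerProduct

variable {E : Type*} [NormedAddCommGroup E] [InnerProductSpace ℝ E] {x y : E}

lemma norm_sub_le_norm_add_of_inner_nonneg (h : 0 ≤ ⟪x, y⟫) : ‖x - y‖ ≤ ‖x + y‖ := by
  refine (pow_le_pow_iff_left₀ (norm_nonneg _) (norm_nonneg _) two_ne_zero).1 ?_
  rw [norm_sub_sq_real, norm_add_sq_real]
  linarith

lemma norm_le_norm_add_of_inner_nonneg (h : 0 ≤ ⟪x, y⟫) : ‖x‖ ≤ ‖x + y‖ := by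
  refine (pow_le_pow_iff_left₀ (norm_nonneg _) (norm_nonneg _) two_ne_zero).1 ?_
  rw [norm_add_sq_real]
  nlinarith [norm_nonneg y]

end InnerProduct

namespace Complex

lemma inner_cpow_inv_two_nonneg {z w : ℂ} (hz : 0 ≤ z.im) (hw : 0 ≤ w.im) :
    0 ≤ ⟪z ^ (2⁻¹ : ℂ), w ^ (2⁻¹ : ℂ)⟫ := by
  rw [Complex.inner, mul_re, conj_re, conj_im, cpow_inv_two_re, cpow_inv_two_re,
    cpow_inv_two_im_eq_sqrt hz, cpow_inv_two_im_eq_sqrt hw]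
  ring_nf
  positivity

lemma sq_cpow_inv_two (z : ℂ) : (z ^ (2⁻¹ : ℂ)) ^ 2 = z := by
  exact_mod_cast cpow_nat_inv_pow z two_ne_zero

lemma cpow_three_halves (z : ℂ) : z ^ ((3 : ℂ) / 2) = (z ^ (2⁻¹ : ℂ)) ^ 3 := by
  rw [← cpow_nat_mul, div_eq_mul_inv]
  norm_num

lemma norm_cube_sub_taylor_le {u v : ℂ} (h : 0 ≤ ⟪u, v⟫) :
    ‖u ^ 3 - v ^ 3 - 3 / 2 * v * (u ^ 2 - v ^ 2)‖ ≤ √‖u ^ 2 - v ^ 2‖ * ‖u ^ 2 - v ^ 2‖ := by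
  have hprod : ‖u ^ 2 - v ^ 2‖ = ‖u - v‖ * ‖u + v‖ := by rw [← norm_mul]; ring_nf
  have hsub : ‖u - v‖ ≤ ‖u + v‖ := norm_sub_le_norm_add_of_inner_nonneg h
  have hlin : ‖2 * u + v‖ ≤ 2 * ‖u + v‖ :=
    calc ‖2 * u + v‖ = ‖u + (u + v)‖ := by ring_nf
      _ ≤ ‖u‖ + ‖u + v‖ := norm_add_le _ _
      _ ≤ 2 * ‖u + v‖ := by linarith [norm_le_norm_add_of_inner_nonneg h]
  have hsqrt : ‖u - v‖ ≤ √‖u ^ 2 - v ^ 2‖ :=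
    Real.le_sqrt_of_sq_le (by rw [hprod, sq]; gcongr)
  calc ‖u ^ 3 - v ^ 3 - 3 / 2 * v * (u ^ 2 - v ^ 2)‖ = ‖u - v‖ ^ 2 * ‖2 * u + v‖ / 2 := by
        rw [show u ^ 3 - v ^ 3 - 3 / 2 * v * (u ^ 2 - v ^ 2) = (u - v) ^ 2 * (2 * u + v) / 2 by
          ring]
        simp
    _ ≤ ‖u - v‖ * ‖u ^ 2 - v ^ 2‖ := by
        rw [hprod]; nlinarith [mul_le_mul_of_nonneg_left hlin (sq_nonneg ‖u - v‖)]
    _ ≤ √‖u ^ 2 - v ^ 2‖ * ‖u ^ 2 - v ^ 2‖ := by gcongr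

lemma norm_cpow_three_halves_sub_taylor_le {z w : ℂ} (hz : 0 ≤ z.im) (hw : 0 ≤ w.im) :
    ‖z ^ ((3 : ℂ) / 2) - w ^ ((3 : ℂ) / 2) - 3 / 2 * w ^ (2⁻¹ : ℂ) * (z - w)‖
      ≤ √‖z - w‖ * ‖z - w‖ := by
  simpa only [cpow_three_halves, sq_cpow_inv_two]
    using norm_cube_sub_taylor_le (inner_cpow_inv_two_nonneg hz hw)

lemma norm_cpow_three_halves_sub_le {z w : ℂ} (hz : 0 ≤ z.im) (hw : 0 ≤ w.im) (δ : ℂ) :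
    ‖z ^ ((3 : ℂ) / 2) - w ^ ((3 : ℂ) / 2) - 3 / 2 * w ^ (2⁻¹ : ℂ) * δ‖
      ≤ √‖z - w‖ * ‖z - w‖ + 3 / 2 * ‖w ^ (2⁻¹ : ℂ)‖ * ‖z - w - δ‖ := by
  calc _ = ‖(z ^ ((3 : ℂ) / 2) - w ^ ((3 : ℂ) / 2) - 3 / 2 * w ^ (2⁻¹ : ℂ) * (z - w))
          + 3 / 2 * w ^ (2⁻¹ : ℂ) * (z - w - δ)‖ := by ring_nf
    _ ≤ _ := by
      refine (norm_add_le _ _).trans (add_le_add (norm_cpow_three_halves_sub_taylor_le hz hw) ?_)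
      rw [norm_mul, norm_mul]
      norm_num

end Complex

namespace Real

lemma abs_cos_sub_one_le (θ : ℝ) : |cos θ - 1| ≤ θ ^ 2 / 2 := by
  rw [abs_le]
  constructor <;> linarith [one_sub_sq_div_two_le_cos (x := θ), cos_le_one θ, sq_nonneg θ]

variable {a b θ : ℝ}

lemma abs_rotation_increment_le (ha : |a| ≤ 1) (hb : |b| ≤ 1) (hθ : |θ| ≤ 1) :
    |a * sin θ + b * (cos θ - 1)| ≤ 2 * |θ| := by
  have hsq : θ ^ 2 ≤ |θ| := by nlinarith [sq_abs θ, abs_nonneg θ]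
  calc |a * sin θ + b * (cos θ - 1)| ≤ |a| * |sin θ| + |b| * |cos θ - 1| := by
        rw [← abs_mul, ← abs_mul]; exact abs_add_le _ _
    _ ≤ 1 * |θ| + 1 * (θ ^ 2 / 2) := add_le_add
        (mul_le_mul ha abs_sin_le_abs (abs_nonneg _) zero_le_one)
        (mul_le_mul hb (abs_cos_sub_one_le θ) (abs_nonneg _) zero_le_one)
    _ ≤ 2 * |θ| := by linarith [abs_nonneg θ]

lemma abs_rotation_increment_sub_le (ha : |a| ≤ 1) (hb : |b| ≤ 1) (hθ : |θ| ≤ 1) :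
    |a * sin θ + b * (cos θ - 1) - a * θ| ≤ θ ^ 2 := by
  have hcube : |θ| ^ 3 ≤ θ ^ 2 := by nlinarith [sq_abs θ, abs_nonneg θ]
  calc |a * sin θ + b * (cos θ - 1) - a * θ|
        = |(-a) * (θ - sin θ) + b * (cos θ - 1)| := by ring_nf
    _ ≤ |a| * |θ - sin θ| + |b| * |cos θ - 1| := by
        rw [← abs_neg a, ← abs_mul, ← abs_mul]; exact abs_add_le _ _
    _ ≤ 1 * (|θ| ^ 3 / 6) + 1 * (θ ^ 2 / 2) := add_le_add
        (mul_le_mul ha (abs_sub_sin_le θ) (abs_nonneg _) zero_le_one)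
        (mul_le_mul hb (abs_cos_sub_one_le θ) (abs_nonneg _) zero_le_one)
    _ ≤ θ ^ 2 := by linarith [sq_nonneg θ]

end Real

lemma tendstoUniformlyOn_of_dist_le {ι α β : Type*} [PseudoMetricSpace β] {F : ι → α → β}
    {f : α → β} {l : Filter ι} {s : Set α} {g : ι → ℝ} (hg : Tendsto g l (𝓝 0))
    (h : ∀ᶠ i in l, ∀ x ∈ s, dist (f x) (F i x) ≤ g i) : TendstoUniformlyOn F f l s :=
  Metric.tendstoUniformlyOn_iff.2 fun _ hε =>
    (h.and (hg.eventually (gt_mem_nhds hε))).mono fun _ hi x hx => (hi.1 x hx).trans_lt hi.2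

open Complex in
lemma abs_rotation_diffQuot_sub_le {a b c θ : ℝ} (hθ0 : θ ≠ 0) (hθ : |θ| ≤ 1) (ha : |a| ≤ 1)
    (hb : |b| ≤ 1) (hc : 0 ≤ c) (hc1 : c ≤ 1) :
    |(((((a * Real.sin θ + b * Real.cos θ : ℝ) : ℂ) + c * I) ^ ((3 : ℂ) / 2)).re
        - (((b : ℂ) + c * I) ^ ((3 : ℂ) / 2)).re) / θ
      - 3 / 2 * a * (((b : ℂ) + c * I) ^ (2⁻¹ : ℂ)).re|
      ≤ 2 * √(2 * |θ|) + 3 * |θ| := by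
  set z : ℂ := ((a * Real.sin θ + b * Real.cos θ : ℝ) : ℂ) + c * I
  set w : ℂ := (b : ℂ) + c * I
  set d := a * Real.sin θ + b * (Real.cos θ - 1)
  have hzw : z - w = d := by simp only [z, w, d]; push_cast; ring
  have hw : ‖w ^ (2⁻¹ : ℂ)‖ ≤ 2 := by
    have hw2 : ‖w‖ ≤ 2 := (norm_add_le _ _).trans (by
      simp only [norm_real, Real.norm_eq_abs, norm_mul, abs_of_nonneg hc, norm_I, mul_one]
      linarith)
    have hsq : ‖w ^ (2⁻¹ : ℂ)‖ ^ 2 = ‖w‖ := by rw [← norm_pow, sq_cpow_inv_two]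
    nlinarith [norm_nonneg (w ^ (2⁻¹ : ℂ))]
  have hd := Real.abs_rotation_increment_le ha hb hθ
  have hdθ := Real.abs_rotation_increment_sub_le ha hb hθ
  set R := z ^ ((3 : ℂ) / 2) - w ^ ((3 : ℂ) / 2) - 3 / 2 * w ^ (2⁻¹ : ℂ) * ((a * θ : ℝ) : ℂ)
  have hR : ‖R‖ ≤ √|d| * |d| + 3 / 2 * ‖w ^ (2⁻¹ : ℂ)‖ * |d - a * θ| := by
    have := norm_cpow_three_halves_sub_le (z := z) (w := w) (by simpa [z]) (by simpa [w])
      ((a * θ : ℝ) : ℂ)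
    rwa [hzw, ← ofReal_sub, norm_real, norm_real, Real.norm_eq_abs, Real.norm_eq_abs] at this
  have hre : ((z ^ ((3 : ℂ) / 2)).re - (w ^ ((3 : ℂ) / 2)).re) / θ
      - 3 / 2 * a * (w ^ (2⁻¹ : ℂ)).re = R.re / θ := by
    rw [show R = z ^ ((3 : ℂ) / 2) - w ^ ((3 : ℂ) / 2) - ((3 / 2 * a * θ : ℝ) : ℂ) * w ^ (2⁻¹ : ℂ)
      by simp only [R]; push_cast; ring, sub_re, sub_re, re_ofReal_mul]
    field_simp
  rw [hre, abs_div, div_le_iff₀ (abs_pos.2 hθ0)]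
  calc |R.re| ≤ ‖R‖ := abs_re_le_norm R
    _ ≤ √|d| * |d| + 3 / 2 * ‖w ^ (2⁻¹ : ℂ)‖ * |d - a * θ| := hR
    _ ≤ √(2 * |θ|) * (2 * |θ|) + 3 / 2 * 2 * θ ^ 2 := by gcongr
    _ = (2 * √(2 * |θ|) + 3 * |θ|) * |θ| := by rw [← sq_abs θ]; ring

/-- Step 2b of Lemma 3.10: for a tangential index `i` (`i < n`),
`(p^{ν_θ} - p^{e_n})/θ → (3/2) x_i Re(x_n + i|x_{n+1}|)^{1/2}` as `θ → 0`,
uniformly on the closed unit ball. -/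
theorem rotation_derivative_of_profile (n : ℕ) (i : Fin (n+2)) :
    TendstoUniformlyOn
      (fun θ : ℝ => fun x : EuclideanSpace ℝ (Fin (n+2)) =>
        (pRot n i θ x - pRot n i 0 x) / θ)
      (fun x : EuclideanSpace ℝ (Fin (n+2)) =>
        (3/2 : ℝ) * x i *
          ((((x ⟨n, by omega⟩ : ℝ) : ℂ)
            + ((|x (Fin.last (n+1))| : ℝ) : ℂ) * Complex.I) ^ ((1:ℂ)/2)).re)
      (𝓝[≠] (0:ℝ))
      (closedBall (0 : EuclideanSpace ℝ (Fin (n+2))) 1) := by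
  have hbound : Tendsto (fun θ : ℝ => 2 * √(2 * |θ|) + 3 * |θ|) (𝓝[≠] 0) (𝓝 0) := by
    have hcont : Continuous fun θ : ℝ => 2 * √(2 * |θ|) + 3 * |θ| := by fun_prop
    exact tendsto_nhdsWithin_of_tendsto_nhds (hcont.tendsto' 0 0 (by simp))
  refine tendstoUniformlyOn_of_dist_le hbound ?_
  filter_upwards [self_mem_nhdsWithin,
    nhdsWithin_le_nhds (closedBall_mem_nhds (0 : ℝ) one_pos)] with θ hθ0 hθ1 x hx
  have hcoord (j : Fin (n + 2)) : |x j| ≤ 1 :=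
    (PiLp.norm_apply_le x j).trans (mem_closedBall_zero_iff.1 hx)
  rw [dist_comm, Real.dist_eq]
  simpa [pRot, one_div] using abs_rotation_diffQuot_sub_le hθ0 (by simpa using hθ1) (hcoord i)
    (hcoord _) (abs_nonneg _) (hcoord _)
end
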